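/- arXiv:2508.16992 — 3 statements merged into one kernel-verified Lean document; each statement's English description precedes it below -/
import Mathlib

section
/- Regret decomposition inequality: under the assumptions below, Φ(Q(T)) − Φ(Q(0)) + V·Σ_{t=1}^T (f_t(x_t) − α f_t(x*)) ≤ Σ_{t=1}^T ( f̂_t(x_t) − α f̂_t(x*) ) + α Φ'(Q(T)) B_T, where f̂_t = V f_t + Φ'(Q(t)) g_t. -/
/-- MVT-based gradient inequality for a function with monotone derivative. -/
lemma mvt_upper {Φ Φ' : ℝ → ℝ}
    (hderiv : ∀ q ∈ Set.Ici (0:ℝ), HasDerivAt Φ (Φ' q) q)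
    (hΦ'mono : MonotoneOn Φ' (Set.Ici (0:ℝ)))
    {a b : ℝ} (hb : 0 ≤ b) (hba : b ≤ a) :
    Φ a - Φ b ≤ Φ' a * (a - b) := by
  rcases eq_or_lt_of_le hba with h | h
  · simp [h]
  · have ha : (0:ℝ) ≤ a := le_trans hb hba
    have hcont : ContinuousOn Φ (Set.Icc b a) := fun z hz =>
      ((hderiv z (le_trans hb hz.1)).continuousAt).continuousWithinAt
    have hd : ∀ z ∈ Set.Ioo b a, HasDerivAt Φ (Φ' z) z := fun z hz =>
      hderiv z (le_trans hb hz.1.le)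
    obtain ⟨c, hc, hceq⟩ := exists_hasDerivAt_eq_slope Φ Φ' h hcont hd
    have hc0 : (0:ℝ) ≤ c := le_trans hb hc.1.le
    have hle : Φ' c ≤ Φ' a := hΦ'mono hc0 ha hc.2.le
    have hpos : (0:ℝ) < a - b := by linarith
    have : (Φ a - Φ b) / (a - b) ≤ Φ' a := hceq ▸ hle
    calc Φ a - Φ b = (Φ a - Φ b) / (a - b) * (a - b) := by field_simp
    _ ≤ Φ' a * (a - b) := by nlinarith

/-- Regret decomposition inequality: the Lyapunov drift plus `V` times the
α-regret of the true costs is bounded by the α-regret of the surrogate costs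
`f̂_t = V f_t + Φ'(Q(t)) g_t` plus `α Φ'(Q(T)) B_T`. -/
theorem regret_decomposition_inequality
    {d : ℕ} (X : Set (EuclideanSpace ℝ (Fin d))) (hX : Convex ℝ X)
    (T : ℕ)
    (f g : ℕ → EuclideanSpace ℝ (Fin d) → ℝ)
    (hf0 : ∀ t, ∀ z ∈ X, 0 ≤ f t z) (hg0 : ∀ t, ∀ z ∈ X, 0 ≤ g t z)
    (x : ℕ → EuclideanSpace ℝ (Fin d)) (hx : ∀ t, x t ∈ X)
    (Q : ℕ → ℝ) (hQ0 : Q 0 = 0)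
    (hQ : ∀ t, 1 ≤ t → Q t = Q (t - 1) + g t (x t))
    (Φ Φ' : ℝ → ℝ)
    (hconv : ConvexOn ℝ (Set.Ici (0:ℝ)) Φ)
    (hmono : MonotoneOn Φ (Set.Ici (0:ℝ)))
    (hderiv : ∀ q ∈ Set.Ici (0:ℝ), HasDerivAt Φ (Φ' q) q)
    (hΦ'mono : MonotoneOn Φ' (Set.Ici (0:ℝ)))
    (hΦ'0 : ∀ q ∈ Set.Ici (0:ℝ), 0 ≤ Φ' q)
    (V α B : ℝ) (hV : 0 < V) (hα : 1 ≤ α)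
    (xstar : EuclideanSpace ℝ (Fin d)) (hxstar : xstar ∈ X)
    (hbudget : ∑ t ∈ Finset.Icc 1 T, g t xstar ≤ B) :
    Φ (Q T) - Φ (Q 0) +
        V * ∑ t ∈ Finset.Icc 1 T, (f t (x t) - α * f t xstar) ≤
      (∑ t ∈ Finset.Icc 1 T,
          ((V * f t (x t) + Φ' (Q t) * g t (x t)) -
            α * (V * f t xstar + Φ' (Q t) * g t xstar))) +
        α * Φ' (Q T) * B := by
  -- Q is monotone
  have hQmono : Monotone Q := by
    apply monotone_nat_of_le_succ
    intro n
    have h := hQ (n+1) (by omega)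
    simp only [Nat.add_sub_cancel] at h
    have := hg0 (n+1) (x (n+1)) (hx (n+1))
    linarith
  have hQnn : ∀ t, 0 ≤ Q t := fun t => hQ0 ▸ hQmono (Nat.zero_le t)
  -- telescoping drift bound
  have key1 : ∀ n, Φ (Q n) - Φ (Q 0) ≤ ∑ t ∈ Finset.Icc 1 n, Φ' (Q t) * g t (x t) := by
    intro n
    induction n with
    | zero => simp
    | succ n ih =>
      rw [Finset.sum_Icc_succ_top (by omega)]
      have hstep : Φ (Q (n+1)) - Φ (Q n) ≤ Φ' (Q (n+1)) * (Q (n+1) - Q n) :=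
        mvt_upper hderiv hΦ'mono (hQnn n) (hQmono (Nat.le_succ n))
      have hq := hQ (n+1) (by omega)
      simp only [Nat.add_sub_cancel] at hq
      have : Q (n+1) - Q n = g (n+1) (x (n+1)) := by linarith
      rw [this] at hstep
      linarith
  have key1T := key1 T
  -- budget bound
  have key2 : ∑ t ∈ Finset.Icc 1 T, Φ' (Q t) * g t xstar ≤ Φ' (Q T) * B := by
    calc ∑ t ∈ Finset.Icc 1 T, Φ' (Q t) * g t xstar
        ≤ ∑ t ∈ Finset.Icc 1 T, Φ' (Q T) * g t xstar := by
          apply Finset.sum_le_sum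
          intro t ht
          have htT : t ≤ T := (Finset.mem_Icc.mp ht).2
          exact mul_le_mul_of_nonneg_right (hΦ'mono (hQnn t) (hQnn T) (hQmono htT))
            (hg0 t xstar hxstar)
      _ = Φ' (Q T) * ∑ t ∈ Finset.Icc 1 T, g t xstar := by rw [Finset.mul_sum]
      _ ≤ Φ' (Q T) * B := mul_le_mul_of_nonneg_left hbudget (hΦ'0 (Q T) (hQnn T))
  have key2' : α * ∑ t ∈ Finset.Icc 1 T, Φ' (Q t) * g t xstar ≤ α * (Φ' (Q T) * B) :=
    mul_le_mul_of_nonneg_left key2 (by linarith)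
  -- rewrite the surrogate sum
  have hsum : ∑ t ∈ Finset.Icc 1 T,
      ((V * f t (x t) + Φ' (Q t) * g t (x t)) -
        α * (V * f t xstar + Φ' (Q t) * g t xstar)) =
      V * ∑ t ∈ Finset.Icc 1 T, (f t (x t) - α * f t xstar) +
      ∑ t ∈ Finset.Icc 1 T, Φ' (Q t) * g t (x t) -
      α * ∑ t ∈ Finset.Icc 1 T, Φ' (Q t) * g t xstar := by
    rw [Finset.mul_sum, Finset.mul_sum, ← Finset.sum_add_distrib, ← Finset.sum_sub_distrib]
    apply Finset.sum_congr rfl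
    intro t _
    ring
  rw [hsum]
  linarith
end

section
/- The ℓ₂-regularized phase retrieval objective f(x) = (1/2)‖y − |Φx|‖² + (λ/2)‖x‖² with λ > 0 is (1 + 1/γ)-approximately convex, where γ = λ / ‖Φ‖²_{2→2} and ‖Φ‖_{2→2} is the operator norm of Φ. -/
/-- Soft-thresholding function: derivative kernel of the convex majorant. -/
noncomputable def rhoAux (τ t : ℝ) : ℝ := if τ < t then t - τ else if t < -τ then t + τ else 0

lemma lemA' (γ τ w : ℝ) (hγ : 0 < γ) (hτ : 0 ≤ τ) :
    γ*((1+γ)*τ - |w|)^2 + γ^2*w^2 ≤ γ*(1+γ)^2*τ^2 + (1+γ)^2*(rhoAux τ w)^2 := by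
  unfold rhoAux
  rcases abs_cases w with ⟨hw, hws⟩ | ⟨hw, hws⟩ <;> rw [hw] <;> split_ifs with h1 h2
  · nlinarith [sq_nonneg ((1+γ)*τ - w), mul_nonneg hγ.le (sq_nonneg w)]
  · linarith
  · nlinarith [mul_nonneg (mul_nonneg hγ.le hws) (by linarith : (0:ℝ) ≤ τ - w),
      mul_nonneg (mul_nonneg (mul_nonneg hγ.le hγ.le) hws) (by linarith : (0:ℝ) ≤ τ - w),
      mul_nonneg (mul_nonneg hγ.le hws) hτ,
      mul_nonneg (mul_nonneg (mul_nonneg hγ.le hγ.le) hws) hτ]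
  · linarith
  · nlinarith [sq_nonneg ((1+γ)*τ + w), mul_nonneg hγ.le (sq_nonneg w)]
  · nlinarith [mul_nonneg (mul_nonneg hγ.le (by linarith : (0:ℝ) ≤ -w)) (by linarith : (0:ℝ) ≤ τ + w),
      mul_nonneg (mul_nonneg (mul_nonneg hγ.le hγ.le) (by linarith : (0:ℝ) ≤ -w)) (by linarith : (0:ℝ) ≤ τ + w),
      mul_nonneg (mul_nonneg hγ.le (by linarith : (0:ℝ) ≤ -w)) hτ,
      mul_nonneg (mul_nonneg (mul_nonneg hγ.le hγ.le) (by linarith : (0:ℝ) ≤ -w)) hτ]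

lemma lemB' (γ τ v : ℝ) (hγ : 0 < γ) (hτ : 0 ≤ τ) :
    γ*(1+γ)^2*τ^2 + (1+γ)^2*(rhoAux τ v)^2 ≤ (1+γ)*(((1+γ)*τ - |v|)^2 + γ*v^2) := by
  unfold rhoAux
  rcases abs_cases v with ⟨hv, hvs⟩ | ⟨hv, hvs⟩ <;> rw [hv] <;> split_ifs with h1 h2 <;>
  nlinarith [sq_nonneg ((1+γ)*(τ - v)), sq_nonneg ((1+γ)*(τ + v)), hγ.le,
    mul_nonneg (mul_nonneg hγ.le hτ) hτ, sq_nonneg ((1+γ)*τ - v), sq_nonneg ((1+γ)*τ + v)]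

lemma lemC (τ v w : ℝ) (hτ : 0 ≤ τ) :
    (rhoAux τ w)^2 + 2*(rhoAux τ w)*(v-w) ≤ (rhoAux τ v)^2 := by
  have hlb : v - τ ≤ rhoAux τ v := by
    unfold rhoAux; split_ifs <;> nlinarith
  have hub : rhoAux τ v ≤ v + τ := by
    unfold rhoAux; split_ifs <;> nlinarith
  have hw : rhoAux τ w = if τ < w then w - τ else if w < -τ then w + τ else 0 := rfl
  split_ifs at hw with h1 h2 <;> rw [hw]
  · nlinarith [sq_nonneg (rhoAux τ v - (w - τ)),
      mul_nonneg (by linarith : (0:ℝ) ≤ w - τ) (by linarith : (0:ℝ) ≤ rhoAux τ v - (v - τ))]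
  · nlinarith [sq_nonneg (rhoAux τ v - (w + τ)),
      mul_nonneg (by linarith : (0:ℝ) ≤ -(w + τ)) (by linarith : (0:ℝ) ≤ (v + τ) - rhoAux τ v)]
  · nlinarith [sq_nonneg (rhoAux τ v)]

/-- Per-coordinate key inequality: `g(w) ≤ (1+1/γ) g(v) + φ'(w)(w - v)` where
`g(t) = ½((1+γ)τ - |t|)² + (γ/2)t²` and `φ` is its convex majorant. -/
lemma keylem (γ τ w v : ℝ) (hγ : 0 < γ) (hτ : 0 ≤ τ) :
    (1/2)*((1+γ)*τ - |w|)^2 + (γ/2)*w^2 ≤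
      (1+1/γ) * ((1/2)*((1+γ)*τ - |v|)^2 + (γ/2)*v^2)
        + (((1+γ)^2/γ) * rhoAux τ w) * (w - v) := by
  have h1 := lemA' γ τ w hγ hτ
  have h2 := lemB' γ τ v hγ hτ
  have h3 := lemC τ v w hτ
  have h3' : (1+γ)^2*((rhoAux τ w)^2 + 2*(rhoAux τ w)*(v-w)) ≤ (1+γ)^2*(rhoAux τ v)^2 :=
    mul_le_mul_of_nonneg_left h3 (sq_nonneg _)
  have key : γ*((1+γ)*τ - |w|)^2 + γ^2*w^2 ≤
      (1+γ)*(((1+γ)*τ - |v|)^2 + γ*v^2) + 2*(1+γ)^2*(rhoAux τ w)*(w-v) := by nlinarith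
  have h2γ : (0:ℝ) < 2*γ := by linarith
  have key2 : (γ*((1+γ)*τ - |w|)^2 + γ^2*w^2)/(2*γ) ≤
      ((1+γ)*(((1+γ)*τ - |v|)^2 + γ*v^2) + 2*(1+γ)^2*(rhoAux τ w)*(w-v))/(2*γ) := by
    apply div_le_div_of_nonneg_right key h2γ.le
  calc (1/2)*((1+γ)*τ - |w|)^2 + (γ/2)*w^2
      = (γ*((1+γ)*τ - |w|)^2 + γ^2*w^2)/(2*γ) := by field_simp
    _ ≤ _ := key2.trans (le_of_eq (by field_simp; ring))

/-- The ℓ₂ → ℓ₂ operator norm of a real matrix. -/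
noncomputable def matrixOpNorm {m n : ℕ} (A : Matrix (Fin m) (Fin n) ℝ) : ℝ :=
  ‖LinearMap.toContinuousLinearMap (Matrix.toEuclideanLin A)‖

lemma opNorm_mulVec_sq {m n : ℕ} (A : Matrix (Fin m) (Fin n) ℝ) (d : Fin n → ℝ) :
    ∑ i, (A.mulVec d i)^2 ≤ (matrixOpNorm A)^2 * ∑ j, (d j)^2 := by
  set L := LinearMap.toContinuousLinearMap (Matrix.toEuclideanLin A) with hL
  set dd : EuclideanSpace ℝ (Fin n) := (EuclideanSpace.equiv (Fin n) ℝ).symm d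
  have h := L.le_opNorm dd
  have h2 : ‖L dd‖^2 ≤ (matrixOpNorm A)^2 * ‖dd‖^2 := by
    rw [← mul_pow]
    exact pow_le_pow_left₀ (norm_nonneg _) h 2
  have hLdd : ∀ i, L dd i = A.mulVec d i := by
    intro i
    simp [L, dd, Matrix.toEuclideanLin, Matrix.toLin'_apply]
  have hn1 : ‖L dd‖^2 = ∑ i, (A.mulVec d i)^2 := by
    rw [EuclideanSpace.norm_eq, Real.sq_sqrt (by positivity)]
    congr 1; ext i; rw [hLdd]; simp [sq_abs]
  have hn2 : ‖dd‖^2 = ∑ j, (d j)^2 := by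
    rw [EuclideanSpace.norm_eq, Real.sq_sqrt (by positivity)]
    congr 1; ext j; simp [dd, sq_abs]
  rw [← hn1, ← hn2]; exact h2

/-- The ℓ₂-regularized phase retrieval objective
`f(x) = (1/2)‖y − |Φx|‖² + (λ/2)‖x‖²` is `(1 + 1/γ)`-approximately convex,
where `γ = λ / ‖Φ‖²_{2→2}`. -/
theorem regularized_phase_retrieval_approx_convex
    {m n : ℕ} (Φ : Matrix (Fin m) (Fin n) ℝ) (y : Fin m → ℝ)
    (hy : ∀ i, 0 ≤ y i) (lam : ℝ) (hlam : 0 < lam)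
    (hΦ : 0 < matrixOpNorm Φ)
    (X : Set (Fin n → ℝ)) (hX : Convex ℝ X)
    (f : (Fin n → ℝ) → ℝ)
    (hf : ∀ x, f x = (1/2) * ∑ i, (y i - |Φ.mulVec x i|)^2 +
      (lam/2) * ∑ j, (x j)^2)
    (γ : ℝ) (hγ : γ = lam / (matrixOpNorm Φ)^2) :
    ∃ H : (Fin n → ℝ) → (Fin n → ℝ),
      ∀ x ∈ X, ∀ u ∈ X,
        f x ≤ (1 + 1/γ) * f u + ∑ j, H x j * (x j - u j) := by
  have hγpos : 0 < γ := by rw [hγ]; positivity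
  have h1γ : (0:ℝ) < 1 + γ := by linarith
  set τ : Fin m → ℝ := fun i => y i / (1+γ) with hτdef
  have hτ : ∀ i, 0 ≤ τ i := fun i => div_nonneg (hy i) h1γ.le
  have hyτ : ∀ i, y i = (1+γ) * τ i := by
    intro i; rw [hτdef]; field_simp
  refine ⟨fun x j =>
      (∑ i, (((1+γ)^2/γ) * rhoAux (τ i) (Φ.mulVec x i)) * Φ i j)
      + (lam * x j - γ * ∑ i, Φ i j * Φ.mulVec x i), ?_⟩
  intro x hx u hu
  set w : Fin m → ℝ := Φ.mulVec x with hw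
  set v : Fin m → ℝ := Φ.mulVec u with hv
  set d : Fin m → ℝ := fun i => ((1+γ)^2/γ) * rhoAux (τ i) (w i) with hd
  have hNlam : γ * (matrixOpNorm Φ)^2 = lam := by
    rw [hγ]; field_simp
  have hop : ∀ z : Fin n → ℝ, γ * ∑ i, (Φ.mulVec z i)^2 ≤ lam * ∑ j, (z j)^2 := by
    intro z
    have h := opNorm_mulVec_sq Φ z
    calc γ * ∑ i, (Φ.mulVec z i)^2 ≤ γ * ((matrixOpNorm Φ)^2 * ∑ j, (z j)^2) :=
          mul_le_mul_of_nonneg_left h hγpos.le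
      _ = lam * ∑ j, (z j)^2 := by rw [← mul_assoc, hNlam]
  have F5 : γ * ∑ i, (v i)^2 ≤ lam * ∑ j, (u j)^2 := hop u
  have F4 : γ * ∑ i, (w i - v i)^2 ≤ lam * ∑ j, (x j - u j)^2 := by
    have h := hop (x - u)
    have hz : ∀ i, Φ.mulVec (x - u) i = w i - v i := by
      intro i; rw [hw, hv, Matrix.mulVec_sub]; simp
    calc γ * ∑ i, (w i - v i)^2 = γ * ∑ i, (Φ.mulVec (x-u) i)^2 := by
          congr 1; exact Finset.sum_congr rfl fun i _ => by rw [hz i]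
      _ ≤ lam * ∑ j, ((x-u) j)^2 := h
      _ = lam * ∑ j, (x j - u j)^2 := by simp
  have F1 : (1/2) * ∑ i, (y i - |w i|)^2 + (γ/2) * ∑ i, (w i)^2 ≤
      (1+1/γ) * ((1/2) * ∑ i, (y i - |v i|)^2 + (γ/2) * ∑ i, (v i)^2)
        + ∑ i, d i * (w i - v i) := by
    have hkey : ∀ i ∈ Finset.univ, (1/2)*(y i - |w i|)^2 + (γ/2)*(w i)^2 ≤
        (1+1/γ) * ((1/2)*(y i - |v i|)^2 + (γ/2)*(v i)^2) + d i * (w i - v i) := by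
      intro i _
      rw [hyτ i]
      exact keylem γ (τ i) (w i) (v i) hγpos (hτ i)
    have hsum := Finset.sum_le_sum hkey
    calc (1/2) * ∑ i, (y i - |w i|)^2 + (γ/2) * ∑ i, (w i)^2
        = ∑ i, ((1/2)*(y i - |w i|)^2 + (γ/2)*(w i)^2) := by
          rw [Finset.sum_add_distrib, ← Finset.mul_sum, ← Finset.mul_sum]
      _ ≤ ∑ i, ((1+1/γ) * ((1/2)*(y i - |v i|)^2 + (γ/2)*(v i)^2) + d i * (w i - v i)) := hsum
      _ = _ := by
          rw [Finset.sum_add_distrib, ← Finset.mul_sum]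
          congr 2
          rw [Finset.sum_add_distrib, ← Finset.mul_sum, ← Finset.mul_sum]
  -- swapping the double sums in ⟨H x, x - u⟩
  have e1 : ∑ j, (∑ i, d i * Φ i j) * (x j - u j) = ∑ i, d i * (w i - v i) := by
    have step : ∀ i, ∑ j, d i * (Φ i j * (x j - u j)) = d i * (w i - v i) := by
      intro i
      rw [← Finset.mul_sum]
      congr 1
      rw [hw, hv]
      simp [Matrix.mulVec, dotProduct, mul_sub, Finset.sum_sub_distrib]
    calc ∑ j, (∑ i, d i * Φ i j) * (x j - u j)
        = ∑ j, ∑ i, d i * (Φ i j * (x j - u j)) := by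
          refine Finset.sum_congr rfl fun j _ => ?_
          rw [Finset.sum_mul]
          exact Finset.sum_congr rfl fun i _ => by ring
      _ = ∑ i, ∑ j, d i * (Φ i j * (x j - u j)) := Finset.sum_comm
      _ = ∑ i, d i * (w i - v i) := Finset.sum_congr rfl fun i _ => step i
  have e2 : ∑ j, (∑ i, Φ i j * w i) * (x j - u j) = ∑ i, w i * (w i - v i) := by
    have step : ∀ i, ∑ j, w i * (Φ i j * (x j - u j)) = w i * (w i - v i) := by
      intro i
      rw [← Finset.mul_sum]
      congr 1
      rw [hw, hv]
      simp [Matrix.mulVec, dotProduct, mul_sub, Finset.sum_sub_distrib]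
    calc ∑ j, (∑ i, Φ i j * w i) * (x j - u j)
        = ∑ j, ∑ i, w i * (Φ i j * (x j - u j)) := by
          refine Finset.sum_congr rfl fun j _ => ?_
          rw [Finset.sum_mul]
          exact Finset.sum_congr rfl fun i _ => by ring
      _ = ∑ i, ∑ j, w i * (Φ i j * (x j - u j)) := Finset.sum_comm
      _ = ∑ i, w i * (w i - v i) := Finset.sum_congr rfl fun i _ => step i
  have hswap : ∑ j, ((∑ i, d i * Φ i j) + (lam * x j - γ * ∑ i, Φ i j * w i)) * (x j - u j)
      = ∑ i, d i * (w i - v i)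
        + (lam * ∑ j, x j * (x j - u j) - γ * ∑ i, w i * (w i - v i)) := by
    have perj : ∀ j, ((∑ i, d i * Φ i j) + (lam * x j - γ * ∑ i, Φ i j * w i)) * (x j - u j)
        = (∑ i, d i * Φ i j) * (x j - u j)
          + (lam * (x j * (x j - u j)) - γ * ((∑ i, Φ i j * w i) * (x j - u j))) := by
      intro j; ring
    calc ∑ j, ((∑ i, d i * Φ i j) + (lam * x j - γ * ∑ i, Φ i j * w i)) * (x j - u j)
        = ∑ j, ((∑ i, d i * Φ i j) * (x j - u j)
          + (lam * (x j * (x j - u j)) - γ * ((∑ i, Φ i j * w i) * (x j - u j)))) :=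
          Finset.sum_congr rfl fun j _ => perj j
      _ = ∑ j, (∑ i, d i * Φ i j) * (x j - u j)
          + (∑ j, lam * (x j * (x j - u j)) - ∑ j, γ * ((∑ i, Φ i j * w i) * (x j - u j))) := by
          rw [Finset.sum_add_distrib, Finset.sum_sub_distrib]
      _ = _ := by rw [← Finset.mul_sum, ← Finset.mul_sum, e1, e2]
  -- quadratic expansion identities
  have F2 : 2 * ∑ j, x j * (x j - u j)
      = ∑ j, (x j)^2 - ∑ j, (u j)^2 + ∑ j, (x j - u j)^2 := by
    rw [Finset.mul_sum, ← Finset.sum_sub_distrib, ← Finset.sum_add_distrib]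
    exact Finset.sum_congr rfl fun j _ => by ring
  have F3 : 2 * ∑ i, w i * (w i - v i)
      = ∑ i, (w i)^2 - ∑ i, (v i)^2 + ∑ i, (w i - v i)^2 := by
    rw [Finset.mul_sum, ← Finset.sum_sub_distrib, ← Finset.sum_add_distrib]
    exact Finset.sum_congr rfl fun i _ => by ring
  have F2' : 2 * (lam * ∑ j, x j * (x j - u j))
      = lam * ∑ j, (x j)^2 - lam * ∑ j, (u j)^2 + lam * ∑ j, (x j - u j)^2 := by
    linear_combination lam * F2
  have F3' : 2 * (γ * ∑ i, w i * (w i - v i))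
      = γ * ∑ i, (w i)^2 - γ * ∑ i, (v i)^2 + γ * ∑ i, (w i - v i)^2 := by
    linear_combination γ * F3
  have hRu : (0:ℝ) ≤ (lam/2) * ∑ j, (u j)^2 - (γ/2) * ∑ i, (v i)^2 := by linarith
  have hα1 : (1:ℝ) ≤ 1 + 1/γ := by
    have : (0:ℝ) < 1/γ := by positivity
    linarith
  have hmul : (lam/2) * ∑ j, (u j)^2 - (γ/2) * ∑ i, (v i)^2
      ≤ (1+1/γ) * ((lam/2) * ∑ j, (u j)^2 - (γ/2) * ∑ i, (v i)^2) :=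
    le_mul_of_one_le_left hRu hα1
  rw [hf x, hf u]
  simp only []
  rw [hswap]
  linarith [F1, F2', F3', F4, F5, hmul]
end

section
/- Define g(x) = (γ‖y‖²)/(2(1+γ)) + (λ/2)·xᵀ(I − ΦᵀΦ/‖Φ‖²_{2→2})x + ((1+γ)/2)·‖(|Φx| − y/(1+γ))₊‖², where (v)₊ is the componentwise positive part. Then g is convex on ℝⁿ. -/
open Matrix

/-!
The constant term is harmless, so convexity reduces to two facts. The quadratic term is
`λ/2` times the quadratic form of `I − ΦᵀΦ/‖Φ‖²`, which is positive semidefinite because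
`‖Φx‖ ≤ ‖Φ‖‖x‖`, and a positive semidefinite quadratic form is convex. The envelope term is a
nonnegative multiple (as `γ ≥ 0`) of a sum of the convex functions `u ↦ ((|u| − c)₊)²`
composed with the coordinates of the linear map `x ↦ Φx`.
-/

open Set

theorem convexOn_sq_posPart_abs_sub (c : ℝ) :
    ConvexOn ℝ univ fun u : ℝ => max (|u| - c) 0 ^ 2 := by
  have hconv : ConvexOn ℝ univ fun u : ℝ => max (|u| - c) 0 :=
    ((convexOn_norm convex_univ).sub (concaveOn_const c convex_univ)).sup
      (convexOn_const 0 convex_univ)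
  exact hconv.pow (fun _ _ => le_max_right _ _) 2

theorem ConvexOn.sum {𝕜 E β ι : Type*} [Semiring 𝕜] [PartialOrder 𝕜] [AddCommMonoid E]
    [AddCommMonoid β] [PartialOrder β] [IsOrderedAddMonoid β] [SMul 𝕜 E] [Module 𝕜 β]
    {s : Set E} (hs : Convex 𝕜 s) {t : Finset ι} {f : ι → E → β}
    (hf : ∀ i ∈ t, ConvexOn 𝕜 s (f i)) : ConvexOn 𝕜 s fun x => ∑ i ∈ t, f i x := by
  classical
  induction t using Finset.induction_on with
  | empty => simpa using convexOn_const 0 hs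
  | insert i t hi ih =>
    simp only [Finset.sum_insert hi]
    exact (hf i (Finset.mem_insert_self i t)).add
      (ih fun j hj => hf j (Finset.mem_insert_of_mem hj))

theorem Matrix.PosSemidef.convexOn_dotProduct_mulVec {n : Type*} [Fintype n]
    {A : Matrix n n ℝ} (hA : A.PosSemidef) : ConvexOn ℝ univ fun x => x ⬝ᵥ A *ᵥ x := by
  refine ⟨convex_univ, fun x _ y _ a b ha hb hab => ?_⟩
  have hA_symm : A.IsSymm := by simpa using hA.1
  have hcross : y ⬝ᵥ A *ᵥ x = x ⬝ᵥ A *ᵥ y := by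
    rw [dotProduct_mulVec, dotProduct_comm, ← mulVec_transpose, hA_symm.eq]
  have hdiff : 0 ≤ (x - y) ⬝ᵥ A *ᵥ (x - y) := by
    simpa using hA.dotProduct_mulVec_nonneg (x - y)
  simp only [mulVec_add, mulVec_sub, mulVec_smul, dotProduct_add, dotProduct_sub,
    add_dotProduct, sub_dotProduct, smul_dotProduct, dotProduct_smul, smul_eq_mul,
    hcross] at hdiff ⊢
  obtain rfl : b = 1 - a := by linarith
  -- the defect of convexity is `a b (x - y)ᵀ A (x - y)`
  nlinarith [mul_nonneg (mul_nonneg ha hb) hdiff]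

theorem EuclideanSpace.norm_toLp_sq {ι : Type*} [Fintype ι] (v : ι → ℝ) :
    ‖WithLp.toLp 2 v‖ ^ 2 = v ⬝ᵥ v := by
  rw [← real_inner_self_eq_norm_sq, EuclideanSpace.inner_toLp_toLp, star_trivial]

open scoped Matrix.Norms.L2Operator in
theorem mulVec_dotProduct_mulVec_le_matrixOpNorm_sq {m n : ℕ} (Φ : Matrix (Fin m) (Fin n) ℝ)
    (x : Fin n → ℝ) : Φ *ᵥ x ⬝ᵥ Φ *ᵥ x ≤ matrixOpNorm Φ ^ 2 * (x ⬝ᵥ x) := by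
  rw [← EuclideanSpace.norm_toLp_sq, ← EuclideanSpace.norm_toLp_sq, ← mul_pow]
  exact pow_le_pow_left₀ (norm_nonneg _) (Φ.l2_opNorm_mulVec (WithLp.toLp 2 x)) 2

theorem Matrix.posSemidef_one_sub_smul_transpose_mul_self {m n : ℕ} (Φ : Matrix (Fin m) (Fin n) ℝ)
    {c : ℝ} (hc₀ : 0 ≤ c) (hc : c * matrixOpNorm Φ ^ 2 ≤ 1) :
    (1 - c • (Φᵀ * Φ)).PosSemidef := by
  refine .of_dotProduct_mulVec_nonneg ?_ fun x => ?_
  · simp [IsHermitian, transpose_sub, transpose_smul, transpose_mul]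
  · have hΦx := mulVec_dotProduct_mulVec_le_matrixOpNorm_sq Φ x
    have hxx : 0 ≤ x ⬝ᵥ x := dotProduct_self_star_nonneg x
    rw [star_trivial, sub_mulVec, one_mulVec, smul_mulVec, ← mulVec_mulVec, dotProduct_sub,
      dotProduct_smul, dotProduct_mulVec, vecMul_transpose, smul_eq_mul, sub_nonneg]
    calc c * (Φ *ᵥ x ⬝ᵥ Φ *ᵥ x) ≤ c * (matrixOpNorm Φ ^ 2 * (x ⬝ᵥ x)) :=
          mul_le_mul_of_nonneg_left hΦx hc₀
      _ = c * matrixOpNorm Φ ^ 2 * (x ⬝ᵥ x) := (mul_assoc _ _ _).symm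
      _ ≤ x ⬝ᵥ x := mul_le_of_le_one_left hxx hc

theorem phase_retrieval_envelope_convex_general
    {m n : ℕ} (Φ : Matrix (Fin m) (Fin n) ℝ) (y : Fin m → ℝ)
    (lam : ℝ) (hlam : 0 < lam)
    (γ : ℝ) (hγ : γ = lam / (matrixOpNorm Φ)^2)
    (g : (Fin n → ℝ) → ℝ)
    (hg : ∀ x, g x = γ * (∑ i, (y i)^2) / (2 * (1 + γ)) +
      (lam/2) * (x ⬝ᵥ ((1 - ((matrixOpNorm Φ)^2)⁻¹ • (Φᵀ * Φ)).mulVec x)) +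
      ((1 + γ)/2) * ∑ i, (max (|Φ.mulVec x i| - y i / (1 + γ)) 0)^2) :
    ConvexOn ℝ Set.univ g := by
  have hγ₀ : 0 ≤ γ := hγ ▸ by positivity
  have hpsd : (1 - ((matrixOpNorm Φ)^2)⁻¹ • (Φᵀ * Φ)).PosSemidef := by
    refine Φ.posSemidef_one_sub_smul_transpose_mul_self (by positivity) ?_
    rcases eq_or_ne (matrixOpNorm Φ ^ 2) 0 with h | h <;> simp [h]
  have hquad := hpsd.convexOn_dotProduct_mulVec.smul (by positivity : 0 ≤ lam / 2)
  have henvelope : ConvexOn ℝ univ fun x : Fin n → ℝ =>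
      ∑ i, max (|(Φ *ᵥ x) i| - y i / (1 + γ)) 0 ^ 2 :=
    .sum convex_univ fun i _ =>
      ((convexOn_sq_posPart_abs_sub _).comp_linearMap (LinearMap.proj i ∘ₗ Φ.mulVecLin) :)
  rw [show g = _ from funext hg]
  exact ((convexOn_const _ convex_univ).add hquad).add
    (henvelope.smul (by positivity : 0 ≤ (1 + γ) / 2))

/-- The function
`g(x) = γ‖y‖²/(2(1+γ)) + (λ/2)·xᵀ(I − ΦᵀΦ/‖Φ‖²)x
       + ((1+γ)/2)·‖(|Φx| − y/(1+γ))₊‖²`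
is convex on ℝⁿ. -/
theorem phase_retrieval_envelope_convex
    {m n : ℕ} (Φ : Matrix (Fin m) (Fin n) ℝ) (y : Fin m → ℝ)
    (hy : ∀ i, 0 ≤ y i) (lam : ℝ) (hlam : 0 < lam)
    (hΦ : 0 < matrixOpNorm Φ)
    (γ : ℝ) (hγ : γ = lam / (matrixOpNorm Φ)^2)
    (g : (Fin n → ℝ) → ℝ)
    (hg : ∀ x, g x = γ * (∑ i, (y i)^2) / (2 * (1 + γ)) +
      (lam/2) * (x ⬝ᵥ ((1 - ((matrixOpNorm Φ)^2)⁻¹ • (Φᵀ * Φ)).mulVec x)) +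
      ((1 + γ)/2) * ∑ i, (max (|Φ.mulVec x i| - y i / (1 + γ)) 0)^2) :
    ConvexOn ℝ Set.univ g :=
  phase_retrieval_envelope_convex_general Φ y lam hlam γ hγ g hg
end
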